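/- Let Q be a finite set of questions, p⁺, p⁻ : Q → ℝ a probe, and g : Q → {0,1} an arbitrary binary map. Let f_p be the induced classifier of p and define h(q) = f_p(q) ⊕ g(q) (exclusive-or of binary values). Define the transformed probe p'⁺(q) = p⁺(q) ⊕ h(q) and p'⁻(q) = p⁻(q) ⊕ h(q), where a ⊕ b = (1 − a)·b + (1 − b)·a. Then the total symmetric CCS loss of p' equals that of p: Σ_{q ∈ Q} [ (p'⁺(q) − (1 − p'⁻(q)))² + (min{p'⁺(q), p'⁻(q), 1 − p'⁺(q), 1 − p'⁻(q)})² ] = Σ_{q ∈ Q} [ (p⁺(q) − (1 − p⁻(q)))² + (min{p⁺(q), p⁻(q), 1 − p⁺(q), 1 − p⁻(q)})² ]. -/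

import Mathlib

/-! Both outputs are flipped (x ↦ 1 - x) on the questions where `h = 1` and kept where `h = 0`,
and the per-question loss is invariant under flipping both outputs: the consistency term is
a square of a quantity that changes sign, and the confidence term is a minimum over a set that
`x ↦ 1 - x` permutes. -/

/-- The continuous exclusive-or of two reals. -/
def cxor (a b : ℝ) : ℝ := (1 - a) * b + (1 - b) * a

theorem cxor_zero_right (a : ℝ) : cxor a 0 = a := by
  simp [cxor]

theorem cxor_one_right (a : ℝ) : cxor a 1 = 1 - a := by
  simp [cxor]

theorem cxor_eq_zero_or_one {a b : ℝ} (ha : a = 0 ∨ a = 1) (hb : b = 0 ∨ b = 1) :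
    cxor a b = 0 ∨ cxor a b = 1 := by
  rcases ha with rfl | rfl <;> rcases hb with rfl | rfl <;> norm_num [cxor]

/-- The contribution of one question to the symmetric CCS loss. -/
def ccsSymLoss (a b : ℝ) : ℝ :=
  (a - (1 - b)) ^ 2 + (min (min a b) (min (1 - a) (1 - b))) ^ 2

theorem ccsSymLoss_one_sub (a b : ℝ) : ccsSymLoss (1 - a) (1 - b) = ccsSymLoss a b := by
  simp only [ccsSymLoss, sub_sub_cancel, min_comm (min (1 - a) (1 - b))]
  ring

theorem ccsSymLoss_cxor {c : ℝ} (hc : c = 0 ∨ c = 1) (a b : ℝ) :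
    ccsSymLoss (cxor a c) (cxor b c) = ccsSymLoss a b := by
  rcases hc with rfl | rfl
  · simp only [cxor_zero_right]
  · simp only [cxor_one_right, ccsSymLoss_one_sub]

/-- Let `f_p` be the induced classifier of a probe `p`, let `g` be an
arbitrary binary map, and set `h = f_p ⊕ g`. Then the transformed probe
`p' = p ⊕ h` has the same total symmetric CCS loss as `p`. -/
theorem symmetric_ccs_loss_preserved_by_classifier_transform {Q : Type*} [Fintype Q]
    (pp pm : Q → ℝ) (g : Q → ℝ) (hg : ∀ q, g q = 0 ∨ g q = 1)
    (fp : Q → ℝ)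
    (hfp : ∀ q, fp q = if (pp q + (1 - pm q)) / 2 > 1 / 2 then (1:ℝ) else 0)
    (h : Q → ℝ) (hh : ∀ q, h q = cxor (fp q) (g q))
    (pp' pm' : Q → ℝ)
    (hpp' : ∀ q, pp' q = cxor (pp q) (h q))
    (hpm' : ∀ q, pm' q = cxor (pm q) (h q)) :
    ∑ q : Q, ((pp' q - (1 - pm' q)) ^ 2 +
        (min (min (pp' q) (pm' q)) (min (1 - pp' q) (1 - pm' q))) ^ 2)
      = ∑ q : Q, ((pp q - (1 - pm q)) ^ 2 +
        (min (min (pp q) (pm q)) (min (1 - pp q) (1 - pm q))) ^ 2) := by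
  refine Finset.sum_congr rfl fun q _ => ?_
  have hfp_binary : fp q = 0 ∨ fp q = 1 := by
    rw [hfp q]
    exact (ite_eq_or_eq _ _ _).symm
  have hh_binary : h q = 0 ∨ h q = 1 := hh q ▸ cxor_eq_zero_or_one hfp_binary (hg q)
  rw [hpp' q, hpm' q]
  exact ccsSymLoss_cxor hh_binary (pp q) (pm q)
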